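/- arXiv:1606.06206 — 3 statements merged into one kernel-verified Lean document; each statement's English description precedes it below -/
import Mathlib

section
/- With the notation of the extension operator: setting Ṽ := Extend(U) = {Extend(φ) : φ ∈ U}, one has the direct sum decomposition V = W₁ ⊕ Ṽ ⊕ W₂, i.e. every element of V decomposes uniquely as a sum of elements of W₁, Ṽ, and W₂. -/
/-! Since `Extend φ - φ ∈ W₁ ⊔ W₂`, a decomposition `v = w₁ + φ + w₂` turns into one through
`Extend φ` by moving the two components of `Extend φ - φ` into the outer summands. Conversely, a
relation `w₁ + Extend φ + w₂ = 0` is a relation `w₁' + φ + w₂' = 0` in `W₁ ⊕ U ⊕ W₂`, which forces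
`φ = 0`, hence `Extend φ = 0` and then `w₁ = w₂ = 0`. -/

namespace Submodule

variable {R M : Type*} [Ring R] [AddCommGroup M] [Module R M]

def IsInternalSum₃ (A B C : Submodule R M) : Prop :=
  ∀ v : M, ∃! t : A × B × C, v = (t.1 : M) + (t.2.1 : M) + (t.2.2 : M)

theorem isInternalSum₃_iff (A B C : Submodule R M) :
    IsInternalSum₃ A B C ↔
      (∀ v : M, ∃ t : A × B × C, v = (t.1 : M) + (t.2.1 : M) + (t.2.2 : M)) ∧
      ∀ t : A × B × C, (t.1 : M) + (t.2.1 : M) + (t.2.2 : M) = 0 → t = 0 := by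
  constructor
  · intro h
    refine ⟨fun v => (h v).exists, fun t ht => (h 0).unique ht.symm ?_⟩
    simp
  · rintro ⟨hex, hind⟩ v
    obtain ⟨t, ht⟩ := hex v
    refine ⟨t, ht, fun t' ht' => sub_eq_zero.mp (hind (t' - t) ?_)⟩
    simp only [Prod.fst_sub, Prod.snd_sub, AddSubgroupClass.coe_sub]
    rw [← sub_eq_zero.mpr (ht'.symm.trans ht)]
    abel

theorem IsInternalSum₃.range_of_sub_mem_sup {A B C : Submodule R M} (h : IsInternalSum₃ A B C)
    (T : B →ₗ[R] M) (hT : ∀ φ : B, ∃ ψ ∈ A ⊔ C, T φ = (φ : M) + ψ) :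
    IsInternalSum₃ A (LinearMap.range T) C := by
  rw [isInternalSum₃_iff] at h ⊢
  obtain ⟨hex, hind⟩ := h
  refine ⟨fun v => ?_, ?_⟩
  · obtain ⟨⟨a, b, c⟩, hv⟩ := hex v
    obtain ⟨ψ, hψ, hTb⟩ := hT b
    obtain ⟨p, hp, q, hq, rfl⟩ := mem_sup.mp hψ
    refine ⟨(⟨a - p, A.sub_mem a.2 hp⟩, ⟨T b, b, rfl⟩, ⟨c - q, C.sub_mem c.2 hq⟩), ?_⟩
    dsimp only at hv ⊢
    rw [hv, hTb]
    abel
  · rintro ⟨a, ⟨_, φ, rfl⟩, c⟩ h0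
    obtain ⟨ψ, hψ, hTφ⟩ := hT φ
    obtain ⟨p, hp, q, hq, rfl⟩ := mem_sup.mp hψ
    have hφ : φ = 0 := by
      have := hind (⟨a + p, A.add_mem a.2 hp⟩, φ, ⟨c + q, C.add_mem c.2 hq⟩) <| by
        dsimp only at h0 ⊢
        rw [← h0, hTφ]
        abel
      exact congrArg (·.2.1) this
    subst hφ
    have hac := hind (a, 0, c) (by simpa using h0)
    simp only [Prod.mk_eq_zero] at hac
    ext <;> simp [hac]

end Submodule

theorem stmt_4_general
    {V : Type*} [NormedAddCommGroup V] [InnerProductSpace ℂ V]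
    (a : V →ₗ[ℂ] V →ₛₗ[starRingEnd ℂ] ℂ)
    (W₁ U W₂ : Submodule ℂ V)
    (hdirect : ∀ v : V, ∃! t : W₁ × U × W₂,
      v = (t.1 : V) + (t.2.1 : V) + (t.2.2 : V))
    (T : U →ₗ[ℂ] V)
    (hT : ∀ φ : U, (∃ ψ ∈ W₁ ⊔ W₂, T φ = (φ : V) + ψ) ∧
      ∀ χ ∈ W₁ ⊔ W₂, a (T φ) χ = 0)
    (Vt : Submodule ℂ V) (hVt : Vt = LinearMap.range T) :
    ∀ v : V, ∃! t : W₁ × Vt × W₂,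
      v = (t.1 : V) + (t.2.1 : V) + (t.2.2 : V) := by
  subst hVt
  exact Submodule.IsInternalSum₃.range_of_sub_mem_sup hdirect T fun φ => (hT φ).1

/-- With `Ṽ := Extend(U)` the range of the extension operator, one has the
direct sum decomposition `V = W₁ ⊕ Ṽ ⊕ W₂`: every element of `V` decomposes
uniquely as a sum of elements of `W₁`, `Ṽ` and `W₂`. -/
theorem stmt_4
    {V : Type*} [NormedAddCommGroup V] [InnerProductSpace ℂ V] [FiniteDimensional ℂ V]
    (a : V →ₗ[ℂ] V →ₛₗ[starRingEnd ℂ] ℂ)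
    (W₁ U W₂ : Submodule ℂ V)
    (hdirect : ∀ v : V, ∃! t : W₁ × U × W₂,
      v = (t.1 : V) + (t.2.1 : V) + (t.2.2 : V))
    (hnondeg : ∀ ψ ∈ W₁ ⊔ W₂, (∀ χ ∈ W₁ ⊔ W₂, a ψ χ = 0) → ψ = 0)
    (T : U →ₗ[ℂ] V)
    (hT : ∀ φ : U, (∃ ψ ∈ W₁ ⊔ W₂, T φ = (φ : V) + ψ) ∧
      ∀ χ ∈ W₁ ⊔ W₂, a (T φ) χ = 0)
    (Vt : Submodule ℂ V) (hVt : Vt = LinearMap.range T) :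
    ∀ v : V, ∃! t : W₁ × Vt × W₂,
      v = (t.1 : V) + (t.2.1 : V) + (t.2.2 : V) :=
  stmt_4_general a W₁ U W₂ hdirect T hT Vt hVt
end

section
/- If a sesquilinear form a on a finite-dimensional Hilbert space V satisfies the inf-sup condition inf_{u≠0} sup_{v≠0} |a(u,v)|/(‖u‖‖v‖) = β > 0, then for every continuous antilinear functional f on V there exists a unique u ∈ V with a(u,v) = f(v) for all v ∈ V, and ‖u‖ ≤ ‖f‖/β. -/
/-!
Both halves come from one estimate: if `‖a u v‖ ≤ C ‖v‖` for all `v`, the inf-sup condition gives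
`β ‖u‖ ≤ C`. With `C = 0` this makes `u ↦ a u` injective, hence, by the Riesz isomorphism between
`V` and its antilinear functionals and a dimension count, bijective; with `a u = f` and `C = ‖f‖`
it is the stability bound.
-/

open InnerProductSpace

theorem mul_norm_le_of_norm_le_mul_of_le_iSup {E F : Type*} [NormedAddCommGroup E] [Norm F]
    {g : E → F} {u : E} {β C : ℝ} (hC : 0 ≤ C)
    (hβ : u ≠ 0 → β ≤ ⨆ v : {v : E // v ≠ 0}, ‖g v‖ / (‖u‖ * ‖(v : E)‖))
    (hg : ∀ v, ‖g v‖ ≤ C * ‖v‖) : β * ‖u‖ ≤ C := by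
  rcases eq_or_ne u 0 with rfl | hu
  · simpa using hC
  have hu' : 0 < ‖u‖ := norm_pos_iff.mpr hu
  have : Nonempty {v : E // v ≠ 0} := ⟨⟨u, hu⟩⟩
  have hsup : (⨆ v : {v : E // v ≠ 0}, ‖g v‖ / (‖u‖ * ‖(v : E)‖)) ≤ C / ‖u‖ := by
    refine ciSup_le fun ⟨v, hv⟩ => ?_
    have hv' : 0 < ‖v‖ := norm_pos_iff.mpr hv
    rw [div_le_div_iff₀ (by positivity) hu']
    calc ‖g v‖ * ‖u‖ ≤ C * ‖v‖ * ‖u‖ := by gcongr; exact hg v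
      _ = C * (‖u‖ * ‖v‖) := by ring
  exact (le_div_iff₀ hu').mp ((hβ hu).trans hsup)

section Riesz

variable {𝕜 V : Type*} [RCLike 𝕜] [NormedAddCommGroup V] [InnerProductSpace 𝕜 V]

theorem exists_eq_inner_right_of_antilinear [FiniteDimensional 𝕜 V] (f : V →ₗ⋆[𝕜] 𝕜) :
    ∃ w : V, ∀ v, f v = ⟪v, w⟫_𝕜 := by
  have := FiniteDimensional.complete 𝕜 V
  let g : V →ₗ[𝕜] 𝕜 := (starLinearEquiv 𝕜 (A := 𝕜)).toLinearMap.comp f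
  refine ⟨(toDual 𝕜 V).symm (LinearMap.toContinuousLinearMap g), fun v => ?_⟩
  rw [← inner_conj_symm, toDual_symm_apply]
  simp [g]

theorem injective_flip_innerₛₗ : Function.Injective (innerₛₗ 𝕜 (E := V)).flip := by
  intro w w' h
  exact ext_inner_left 𝕜 fun v => congrArg (fun φ => φ v) h

noncomputable def toAntidual [FiniteDimensional 𝕜 V] : V ≃ₗ[𝕜] (V →ₗ⋆[𝕜] 𝕜) :=
  LinearEquiv.ofBijective (innerₛₗ 𝕜).flip ⟨injective_flip_innerₛₗ, fun f => by
    obtain ⟨w, hw⟩ := exists_eq_inner_right_of_antilinear f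
    exact ⟨w, LinearMap.ext fun v => (hw v).symm⟩⟩

theorem surjective_of_injective_sesqForm [FiniteDimensional 𝕜 V] {a : V →ₗ[𝕜] V →ₗ⋆[𝕜] 𝕜}
    (ha : Function.Injective a) : Function.Surjective a :=
  have := (toAntidual (𝕜 := 𝕜) (V := V)).finiteDimensional
  (LinearMap.injective_iff_surjective_of_finrank_eq_finrank toAntidual.finrank_eq).mp ha

end Riesz

/-- If a sesquilinear form on a finite-dimensional complex Hilbert space
satisfies the inf-sup condition with constant `β > 0`, then for every
continuous antilinear functional `f` there is a unique `u` with
`a(u,v) = f(v)` for all `v`, and it satisfies `‖u‖ ≤ ‖f‖/β`. -/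
theorem stmt_13
    {V : Type*} [NormedAddCommGroup V] [InnerProductSpace ℂ V] [FiniteDimensional ℂ V]
    (a : V →ₗ[ℂ] V →ₛₗ[starRingEnd ℂ] ℂ)
    (β : ℝ) (hβ : 0 < β)
    (hinfsup : ∀ u : V, u ≠ 0 →
      β ≤ ⨆ v : {v : V // v ≠ 0}, ‖a u (v : V)‖ / (‖u‖ * ‖(v : V)‖)) :
    ∀ f : V →SL[starRingEnd ℂ] ℂ,
      (∃! u : V, ∀ v : V, a u v = f v) ∧
      (∀ u : V, (∀ v : V, a u v = f v) → ‖u‖ ≤ ‖f‖ / β) := by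
  intro f
  have hinj : Function.Injective a := by
    refine (injective_iff_map_eq_zero a).mpr fun u hu => norm_le_zero_iff.mp ?_
    exact nonpos_of_mul_nonpos_right
      (mul_norm_le_of_norm_le_mul_of_le_iSup le_rfl (hinfsup u) fun v => by simp [hu]) hβ
  have hbound : ∀ u : V, (∀ v, a u v = f v) → ‖u‖ ≤ ‖f‖ / β := fun u hu => by
    rw [le_div_iff₀ hβ, mul_comm]
    exact mul_norm_le_of_norm_le_mul_of_le_iSup (norm_nonneg f) (hinfsup u)
      fun v => hu v ▸ f.le_opNorm v
  obtain ⟨u, hu⟩ := surjective_of_injective_sesqForm hinj (f : V →ₗ⋆[ℂ] ℂ)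
  exact ⟨⟨u, fun v => congrArg (fun φ => φ v) hu, fun u' hu' => hinj (hu ▸ LinearMap.ext hu')⟩,
    hbound⟩
end

section
/- Low-frequency degeneration of the inf-sup constant: with a(u,v;ω) = b(u,v) − ω² m(u,v) + iω r(u,v) and norm ‖u‖_V² = b(u,u) + ω_max² m(u,u) + ω_max r(u,u), if there exists a nonzero u₀ ∈ V with b(u₀,u₀) = 0 (equivalently u₀ in the kernel of b, e.g. a gradient field in H(curl)), then the inf-sup constant β(ω) := inf_{u≠0} sup_{v≠0} |a(u,v;ω)|/(‖u‖_V‖v‖_V) satisfies β(ω) → β(0) ≤ sup_{v≠0} |a(u₀,v;0)|/(‖u₀‖_V‖v‖_V) as ω → 0, and if additionally b(u₀,v) = 0 for all v ∈ V then lim_{ω→0} β(ω) = 0. -/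
/-!
By Cauchy–Schwarz for the nonnegative Hermitian forms `m` and `r`, the energy norm gives
`ω_max² |m(u,v)| ≤ ‖u‖‖v‖` and `ω_max |r(u,v)| ≤ ‖u‖‖v‖`, so every quotient
`|a(u,v;ω)|/(‖u‖‖v‖)` differs from `|b(u,v)|/(‖u‖‖v‖)` by at most `ω²/ω_max² + |ω|/ω_max`.
Taking a supremum over `v` and then an infimum over `u` preserves this uniform bound, hence
`|β(ω) - β(0)| ≤ ω²/ω_max² + |ω|/ω_max → 0`. The bound on `β(0)` is the infimum evaluated at
`u₀`, and when `u₀` lies in the kernel of `b` that value is `0`.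
-/

open Set Filter Topology

section InfSup

variable {ι : Type*} [Nonempty ι] {f g : ι → ℝ} {ε : ℝ}

theorem abs_ciSup_sub_ciSup_le (hg : BddAbove (range g)) (h : ∀ i, |f i - g i| ≤ ε) :
    |(⨆ i, f i) - ⨆ i, g i| ≤ ε := by
  have hf : BddAbove (range f) := by
    obtain ⟨M, hM⟩ := hg
    refine ⟨M + ε, forall_mem_range.2 fun i => ?_⟩
    linarith [(abs_sub_le_iff.1 (h i)).1, hM (mem_range_self i)]
  refine abs_sub_le_iff.2 ⟨sub_le_iff_le_add.2 (ciSup_le fun i => ?_),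
    sub_le_iff_le_add.2 (ciSup_le fun i => ?_)⟩
  · linarith [(abs_sub_le_iff.1 (h i)).1, le_ciSup hg i]
  · linarith [(abs_sub_le_iff.1 (h i)).2, le_ciSup hf i]

theorem abs_ciInf_sub_ciInf_le (hg : BddBelow (range g)) (h : ∀ i, |f i - g i| ≤ ε) :
    |(⨅ i, f i) - ⨅ i, g i| ≤ ε := by
  have hf : BddBelow (range f) := by
    obtain ⟨M, hM⟩ := hg
    refine ⟨M - ε, forall_mem_range.2 fun i => ?_⟩
    linarith [(abs_sub_le_iff.1 (h i)).2, hM (mem_range_self i)]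
  refine abs_sub_le_iff.2 ⟨sub_le_comm.1 (le_ciInf fun i => ?_),
    sub_le_comm.1 (le_ciInf fun i => ?_)⟩
  · linarith [(abs_sub_le_iff.1 (h i)).1, ciInf_le hf i]
  · linarith [(abs_sub_le_iff.1 (h i)).2, ciInf_le hg i]

end InfSup

theorem norm_apply_sq_le_re_mul_re {V : Type*} [AddCommGroup V] [Module ℂ V]
    (f : V →ₗ[ℂ] V →ₛₗ[starRingEnd ℂ] ℂ) (hherm : ∀ u v : V, f u v = starRingEnd ℂ (f v u))
    (hpos : ∀ u : V, 0 ≤ (f u u).re) (u v : V) : ‖f u v‖ ^ 2 ≤ (f u u).re * (f v v).re := by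
  let core : PreInnerProductSpace.Core ℂ V :=
    { inner := fun x y => f y x
      conj_inner_symm := fun x y => (hherm y x).symm
      re_inner_nonneg := hpos
      add_left := fun x y z => map_add (f z) x y
      smul_left := fun x y t => by simp }
  have h : ‖f u v‖ * ‖f v u‖ ≤ (f v v).re * (f u u).re :=
    @InnerProductSpace.Core.inner_mul_inner_self_le ℂ V _ _ _ core v u
  have hsymm : ‖f v u‖ = ‖f u v‖ := by rw [hherm v u, Complex.norm_conj]
  rw [hsymm] at h
  linarith

theorem mul_norm_apply_le_norm_mul_norm {V : Type*} [SeminormedAddCommGroup V] [Module ℂ V]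
    (f : V →ₗ[ℂ] V →ₛₗ[starRingEnd ℂ] ℂ) (hherm : ∀ u v : V, f u v = starRingEnd ℂ (f v u))
    (hpos : ∀ u : V, 0 ≤ (f u u).re) {C : ℝ} (hC : 0 ≤ C)
    (hbound : ∀ u : V, C * (f u u).re ≤ ‖u‖ ^ 2) (u v : V) :
    C * ‖f u v‖ ≤ ‖u‖ * ‖v‖ := by
  refine (pow_le_pow_iff_left₀ (by positivity) (by positivity) two_ne_zero).1 ?_
  calc (C * ‖f u v‖) ^ 2 = C ^ 2 * ‖f u v‖ ^ 2 := by ring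
    _ ≤ C ^ 2 * ((f u u).re * (f v v).re) :=
        mul_le_mul_of_nonneg_left (norm_apply_sq_le_re_mul_re f hherm hpos u v) (sq_nonneg C)
    _ = (C * (f u u).re) * (C * (f v v).re) := by ring
    _ ≤ ‖u‖ ^ 2 * ‖v‖ ^ 2 :=
        mul_le_mul (hbound u) (hbound v) (mul_nonneg hC (hpos v)) (by positivity)
    _ = (‖u‖ * ‖v‖) ^ 2 := by ring

theorem abs_norm_div_sub_norm_div_le {B M R : ℂ} {ω ωmax N : ℝ} (hωmax : 0 < ωmax)
    (hN : 0 ≤ N) (hM : ωmax ^ 2 * ‖M‖ ≤ N) (hR : ωmax * ‖R‖ ≤ N) :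
    |‖B - (ω : ℂ) ^ 2 * M + Complex.I * (ω : ℂ) * R‖ / N - ‖B‖ / N| ≤
      ω ^ 2 / ωmax ^ 2 + |ω| / ωmax := by
  rw [← sub_div, abs_div, abs_of_nonneg hN]
  refine div_le_of_le_mul₀ hN (by positivity) ?_
  calc |‖B - (ω : ℂ) ^ 2 * M + Complex.I * (ω : ℂ) * R‖ - ‖B‖|
      ≤ ‖B - (ω : ℂ) ^ 2 * M + Complex.I * (ω : ℂ) * R - B‖ := abs_norm_sub_norm_le _ _
    _ = ‖-((ω : ℂ) ^ 2 * M) + Complex.I * (ω : ℂ) * R‖ := by ring_nf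
    _ ≤ ω ^ 2 * ‖M‖ + |ω| * ‖R‖ := by
        refine (norm_add_le _ _).trans_eq ?_
        simp [sq_abs]
    _ = ω ^ 2 / ωmax ^ 2 * (ωmax ^ 2 * ‖M‖) + |ω| / ωmax * (ωmax * ‖R‖) := by
        field_simp
    _ ≤ ω ^ 2 / ωmax ^ 2 * N + |ω| / ωmax * N := by gcongr
    _ = (ω ^ 2 / ωmax ^ 2 + |ω| / ωmax) * N := by ring

theorem stmt_15_general
    {V : Type*} [NormedAddCommGroup V] [InnerProductSpace ℂ V]
    (b m r : V →ₗ[ℂ] V →ₛₗ[starRingEnd ℂ] ℂ)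
    (hbherm : ∀ u v : V, b u v = starRingEnd ℂ (b v u))
    (hmherm : ∀ u v : V, m u v = starRingEnd ℂ (m v u))
    (hrherm : ∀ u v : V, r u v = starRingEnd ℂ (r v u))
    (hbpos : ∀ u : V, 0 ≤ (b u u).re)
    (hmpos : ∀ u : V, 0 ≤ (m u u).re)
    (hrpos : ∀ u : V, 0 ≤ (r u u).re)
    (ωmax : ℝ) (hωmax : 0 < ωmax)
    (hnorm : ∀ u : V, ((‖u‖ ^ 2 : ℝ) : ℂ) =
      b u u + (ωmax : ℂ) ^ 2 * m u u + (ωmax : ℂ) * r u u)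
    (u₀ : V) (hu₀ : u₀ ≠ 0)
    (β : ℝ → ℝ)
    (hβ : ∀ ω : ℝ, β ω =
      ⨅ u : {u : V // u ≠ 0}, ⨆ v : {v : V // v ≠ 0},
        ‖b (u : V) (v : V) - (ω : ℂ) ^ 2 * m (u : V) (v : V)
            + Complex.I * (ω : ℂ) * r (u : V) (v : V)‖ /
          (‖(u : V)‖ * ‖(v : V)‖)) :
    Filter.Tendsto β (nhdsWithin 0 (Set.Ioi 0)) (nhds (β 0)) ∧
    β 0 ≤ (⨆ v : {v : V // v ≠ 0}, ‖b u₀ (v : V)‖ / (‖u₀‖ * ‖(v : V)‖)) ∧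
    ((∀ v : V, b u₀ v = 0) →
      Filter.Tendsto β (nhdsWithin 0 (Set.Ioi 0)) (nhds 0)) := by
  have : Nonempty {u : V // u ≠ 0} := ⟨⟨u₀, hu₀⟩⟩
  have hre (u : V) : (b u u).re + ωmax ^ 2 * (m u u).re + ωmax * (r u u).re = ‖u‖ ^ 2 := by
    simpa [← Complex.ofReal_pow] using (congrArg Complex.re (hnorm u)).symm
  have hb (u v : V) : ‖b u v‖ ≤ ‖u‖ * ‖v‖ := by
    simpa using mul_norm_apply_le_norm_mul_norm b hbherm hbpos zero_le_one
      (fun u => by nlinarith [hre u, hmpos u, hrpos u]) u v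
  have hm := mul_norm_apply_le_norm_mul_norm m hmherm hmpos (sq_nonneg ωmax)
    (fun u => by nlinarith [hre u, hbpos u, hrpos u])
  have hr := mul_norm_apply_le_norm_mul_norm r hrherm hrpos hωmax.le
    (fun u => by nlinarith [hre u, hbpos u, hmpos u, sq_nonneg ωmax])
  have hβ_sub (ω : ℝ) : |β ω - β 0| ≤ ω ^ 2 / ωmax ^ 2 + |ω| / ωmax := by
    rw [hβ, hβ]
    refine abs_ciInf_sub_ciInf_le
      ⟨0, forall_mem_range.2 fun u => Real.iSup_nonneg fun v => by positivity⟩ fun u => ?_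
    refine abs_ciSup_sub_ciSup_le
      ⟨1, forall_mem_range.2 fun v => div_le_one_of_le₀ (by simpa using hb u v) (by positivity)⟩
      fun v => ?_
    simpa using abs_norm_div_sub_norm_div_le (B := b u v) (ω := ω) hωmax (by positivity)
      (hm u v) (hr u v)
  have hβ_cont : Tendsto β (𝓝[>] 0) (𝓝 (β 0)) := by
    have hD : Tendsto (fun ω : ℝ => ω ^ 2 / ωmax ^ 2 + |ω| / ωmax) (𝓝 0) (𝓝 0) := by
      simpa using (show Continuous fun ω : ℝ => ω ^ 2 / ωmax ^ 2 + |ω| / ωmax by fun_prop).tendsto 0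
    refine (tendsto_iff_norm_sub_tendsto_zero.2 ?_).mono_left nhdsWithin_le_nhds
    exact squeeze_zero_norm (fun ω => by simpa using hβ_sub ω) hD
  have hβ_le : β 0 ≤ ⨆ v : {v : V // v ≠ 0}, ‖b u₀ (v : V)‖ / (‖u₀‖ * ‖(v : V)‖) := by
    rw [hβ]
    refine (ciInf_le ⟨0, forall_mem_range.2 fun u => Real.iSup_nonneg fun v => by positivity⟩
      ⟨u₀, hu₀⟩).trans_eq ?_
    simp
  refine ⟨hβ_cont, hβ_le, fun hker => ?_⟩
  have hβ0 : β 0 = 0 :=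
    le_antisymm (hβ_le.trans_eq (by simp [hker]))
      (hβ 0 ▸ Real.iInf_nonneg fun u => Real.iSup_nonneg fun v => by positivity)
  rwa [hβ0] at hβ_cont

/-- Low-frequency degeneration of the inf-sup constant: for
`a(u,v;ω) = b(u,v) - ω² m(u,v) + iω r(u,v)` with the energy norm
`‖u‖² = b(u,u) + ω_max² m(u,u) + ω_max r(u,u)`, if there is a nonzero `u₀`
with `b(u₀,u₀) = 0`, then as `ω → 0` the inf-sup constant `β(ω)` tends to
`β(0) ≤ sup_{v ≠ 0} |a(u₀,v;0)|/(‖u₀‖‖v‖)`, and if moreover `b(u₀,v) = 0`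
for all `v`, then `β(ω) → 0`. -/
theorem stmt_15
    {V : Type*} [NormedAddCommGroup V] [InnerProductSpace ℂ V] [FiniteDimensional ℂ V]
    (b m r : V →ₗ[ℂ] V →ₛₗ[starRingEnd ℂ] ℂ)
    (hbherm : ∀ u v : V, b u v = starRingEnd ℂ (b v u))
    (hmherm : ∀ u v : V, m u v = starRingEnd ℂ (m v u))
    (hrherm : ∀ u v : V, r u v = starRingEnd ℂ (r v u))
    (hbpos : ∀ u : V, 0 ≤ (b u u).re)
    (hmpos : ∀ u : V, 0 ≤ (m u u).re)
    (hrpos : ∀ u : V, 0 ≤ (r u u).re)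
    (ωmax : ℝ) (hωmax : 0 < ωmax)
    (hnorm : ∀ u : V, ((‖u‖ ^ 2 : ℝ) : ℂ) =
      b u u + (ωmax : ℂ) ^ 2 * m u u + (ωmax : ℂ) * r u u)
    (u₀ : V) (hu₀ : u₀ ≠ 0) (hbu₀ : b u₀ u₀ = 0)
    (β : ℝ → ℝ)
    (hβ : ∀ ω : ℝ, β ω =
      ⨅ u : {u : V // u ≠ 0}, ⨆ v : {v : V // v ≠ 0},
        ‖b (u : V) (v : V) - (ω : ℂ) ^ 2 * m (u : V) (v : V)
            + Complex.I * (ω : ℂ) * r (u : V) (v : V)‖ /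
          (‖(u : V)‖ * ‖(v : V)‖)) :
    Filter.Tendsto β (nhdsWithin 0 (Set.Ioi 0)) (nhds (β 0)) ∧
    β 0 ≤ (⨆ v : {v : V // v ≠ 0}, ‖b u₀ (v : V)‖ / (‖u₀‖ * ‖(v : V)‖)) ∧
    ((∀ v : V, b u₀ v = 0) →
      Filter.Tendsto β (nhdsWithin 0 (Set.Ioi 0)) (nhds 0)) :=
  stmt_15_general b m r hbherm hmherm hrherm hbpos hmpos hrpos ωmax hωmax hnorm u₀ hu₀ β hβ
end
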